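/- Let (X,d) be a metric space, v : X → ℝ bounded below, G : X → [0,∞) a Borel strong upper gradient of v, and set ℓ := v + (1/2)G². Let γ : [0,∞) → X be continuous, admitting a locally square-integrable upper speed m : [0,∞) → [0,∞) (its restriction to each compact interval is an upper speed of the restricted curve), and with G∘γ locally square-integrable. Then ∫_0^∞ e^{−t} ( (1/2) m(t)² + ℓ(γ(t)) ) dt ≥ v(γ(0)), where the integral is well-defined in (−∞,+∞] since the integrand is bounded below by t ↦ e^{−t} · inf v. -/

import Mathlib

open MeasureTheory Set Filter
open scoped ENNReal

noncomputable section

/-- `m` is a (nonnegative, integrable) upper speed of the curve `γ` on `[a,b]`: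
`dist (γ s) (γ t) ≤ ∫_s^t m` for all `a ≤ s ≤ t ≤ b`. -/
def IsUpperSpeedOn {X : Type*} [MetricSpace X] (γ : ℝ → X) (m : ℝ → ℝ) (a b : ℝ) : Prop :=
  (∀ r ∈ Set.Icc a b, 0 ≤ m r) ∧
  IntervalIntegrable m MeasureTheory.volume a b ∧
  ∀ s t : ℝ, a ≤ s → s ≤ t → t ≤ b → dist (γ s) (γ t) ≤ ∫ r in s..t, m r

/-- The Finsler cost `d_G(x,y)`: the infimum of `∫_0^1 m(t) G(γ(t)) dt` over continuous
curves `γ : [0,1] → X` joining `x` to `y` with integrable upper speed `m`;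
`+∞` if no admissible pair exists. -/
def finslerCost {X : Type*} [MetricSpace X] (G : X → ℝ) (x y : X) : ℝ≥0∞ :=
  sInf { c : ℝ≥0∞ | ∃ γ : ℝ → X, ∃ m : ℝ → ℝ,
    ContinuousOn γ (Set.Icc 0 1) ∧ γ 0 = x ∧ γ 1 = y ∧
    IsUpperSpeedOn γ m 0 1 ∧
    c = ∫⁻ t in Set.Ioc (0:ℝ) 1, ENNReal.ofReal (m t * G (γ t)) }

/-- The action `E_G^T(x,y)`: the infimum of `∫_0^T ((1/2) m(t)² + (1/2) G(γ(t))²) dt` over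
continuous curves `γ : [0,T] → X` joining `x` to `y` with square-integrable upper speed `m`;
`+∞` if no admissible pair exists. -/
def actionCost {X : Type*} [MetricSpace X] (G : X → ℝ) (T : ℝ) (x y : X) : ℝ≥0∞ :=
  sInf { c : ℝ≥0∞ | ∃ γ : ℝ → X, ∃ m : ℝ → ℝ,
    ContinuousOn γ (Set.Icc 0 T) ∧ γ 0 = x ∧ γ T = y ∧
    IsUpperSpeedOn γ m 0 T ∧
    IntervalIntegrable (fun t => (m t) ^ 2) MeasureTheory.volume 0 T ∧
    c = ∫⁻ t in Set.Ioc (0:ℝ) T,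
          ENNReal.ofReal ((1/2) * (m t) ^ 2 + (1/2) * (G (γ t)) ^ 2) }

/-- `G` is a strong upper gradient of `v`: along every continuous curve with integrable
upper speed `m`, `|v(γ t) − v(γ s)| ≤ ∫_s^t G(γ r) m(r) dr` (the right-hand side taken as a
possibly infinite nonnegative integral). -/
def IsStrongUpperGradient {X : Type*} [MetricSpace X] (G v : X → ℝ) : Prop :=
  ∀ (a b : ℝ) (γ : ℝ → X) (m : ℝ → ℝ),
    ContinuousOn γ (Set.Icc a b) → IsUpperSpeedOn γ m a b →
    ∀ s t : ℝ, a ≤ s → s ≤ t → t ≤ b →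
      ENNReal.ofReal |v (γ t) - v (γ s)| ≤
        ∫⁻ r in Set.Ioc s t, ENNReal.ofReal (G (γ r) * m r)

/-- A gradient-flow curve (curve of maximal slope in energy-dissipation form) of `v` with
respect to `G`: `η` is continuous on `[0,∞)`, `G∘η` is square-integrable on compacts and is
an upper speed of `η` on every compact subinterval of `[0,∞)`, and the energy-dissipation
equality `v(η s) − v(η t) = ∫_s^t G(η r)² dr` holds for `0 ≤ s ≤ t`. -/
def IsGradientFlowCurve {X : Type*} [MetricSpace X] (v G : X → ℝ) (η : ℝ → X) : Prop :=
  ContinuousOn η (Set.Ici 0) ∧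
  (∀ b : ℝ, 0 ≤ b → IntervalIntegrable (fun t => (G (η t)) ^ 2) MeasureTheory.volume 0 b) ∧
  (∀ a b : ℝ, 0 ≤ a → a ≤ b → IsUpperSpeedOn η (fun t => G (η t)) a b) ∧
  ∀ s t : ℝ, 0 ≤ s → s ≤ t → v (η s) - v (η t) = ∫ r in s..t, (G (η r)) ^ 2

/-! For `s > 0`, the strong upper gradient property along `γ|[0,s]` together with
`G m ≤ ½ m² + ½ G²` gives `v(γ 0) - B ≤ ∫₀ˢ (½ m² + ½ G(γ)²) + (v(γ s) - B)`. Averaging this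
against the probability density `e^{-s}` on `(0,∞)` and exchanging the order of integration
(`∫ₜ^∞ e^{-s} ds = e^{-t}`) turns the right-hand side into the discounted cost. -/

open Real

theorem lintegral_Ioi_ofReal_exp_neg (a : ℝ) :
    ∫⁻ s in Ioi a, ENNReal.ofReal (exp (-s)) = ENNReal.ofReal (exp (-a)) := by
  rw [← ofReal_integral_eq_lintegral_ofReal, integral_exp_neg_Ioi]
  · have h := exp_neg_integrableOn_Ioi a one_pos
    simp only [neg_mul, one_mul] at h
    exact h
  · exact .of_forall fun s => (exp_pos _).le

theorem lintegral_Ioi_mul_lintegral_Ioc_of_measurable {w ψ : ℝ → ℝ≥0∞} {a : ℝ}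
    (hw : Measurable w) (hψ : Measurable ψ) :
    ∫⁻ s in Ioi a, w s * ∫⁻ t in Ioc a s, ψ t = ∫⁻ t in Ioi a, (∫⁻ s in Ici t, w s) * ψ t := by
  set K : ℝ → ℝ → ℝ≥0∞ := fun s t => if t ≤ s then w s * ψ t else 0
  have hK : Measurable (Function.uncurry K) :=
    Measurable.ite (measurableSet_le measurable_snd measurable_fst)
      ((hw.comp measurable_fst).mul (hψ.comp measurable_snd)) measurable_const
  have inner_t : ∀ s, w s * ∫⁻ t in Ioc a s, ψ t = ∫⁻ t in Ioi a, K s t := by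
    intro s
    rw [← lintegral_const_mul _ hψ, ← Ioi_inter_Iic, inter_comm,
      ← Measure.restrict_restrict measurableSet_Iic, ← lintegral_indicator measurableSet_Iic]
    rfl
  have inner_s : ∀ t ∈ Ioi a, (∫⁻ s in Ici t, w s) * ψ t = ∫⁻ s in Ioi a, K s t := by
    intro t ht
    rw [← lintegral_mul_const _ hw, ← inter_eq_self_of_subset_left (Ici_subset_Ioi.2 ht),
      ← Measure.restrict_restrict measurableSet_Ici, ← lintegral_indicator measurableSet_Ici]
    rfl
  simp_rw [inner_t]
  rw [setLIntegral_congr_fun measurableSet_Ioi inner_s]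
  exact lintegral_lintegral_swap hK.aemeasurable

theorem lintegral_Ioi_mul_lintegral_Ioc {w ψ : ℝ → ℝ≥0∞} {a : ℝ} (hw : Measurable w)
    (hψ : AEMeasurable ψ (volume.restrict (Ioi a))) :
    ∫⁻ s in Ioi a, w s * ∫⁻ t in Ioc a s, ψ t = ∫⁻ t in Ioi a, (∫⁻ s in Ici t, w s) * ψ t := by
  have h_inner : ∀ s, ∫⁻ t in Ioc a s, ψ t = ∫⁻ t in Ioc a s, hψ.mk ψ t := fun s =>
    lintegral_congr_ae (ae_restrict_of_ae_restrict_of_subset Ioc_subset_Ioi_self hψ.ae_eq_mk)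
  simp_rw [h_inner]
  rw [lintegral_Ioi_mul_lintegral_Ioc_of_measurable hw hψ.measurable_mk]
  exact lintegral_congr_ae (hψ.ae_eq_mk.mono fun t ht => by simp only [ht])

theorem IsStrongUpperGradient.ofReal_sub_le_lintegral {X : Type*} [MetricSpace X] {G v : X → ℝ}
    (hG : IsStrongUpperGradient G v) {γ : ℝ → X} {m : ℝ → ℝ} {a b : ℝ} (hab : a ≤ b)
    (hγ : ContinuousOn γ (Icc a b)) (hm : IsUpperSpeedOn γ m a b) :
    ENNReal.ofReal (v (γ a) - v (γ b)) ≤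
      ∫⁻ t in Ioc a b, ENNReal.ofReal (1 / 2 * m t ^ 2 + 1 / 2 * G (γ t) ^ 2) :=
  calc ENNReal.ofReal (v (γ a) - v (γ b))
      ≤ ENNReal.ofReal |v (γ b) - v (γ a)| :=
        ENNReal.ofReal_le_ofReal (abs_sub_comm (v (γ a)) _ ▸ le_abs_self _)
    _ ≤ ∫⁻ t in Ioc a b, ENNReal.ofReal (G (γ t) * m t) := hG a b γ m hγ hm a b le_rfl hab le_rfl
    _ ≤ _ := lintegral_mono fun t => ENNReal.ofReal_le_ofReal <| by
        nlinarith [two_mul_le_add_sq (G (γ t)) (m t)]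

theorem le_lintegral_exp_neg_mul_add {c : ℝ≥0∞} {ψ f : ℝ → ℝ≥0∞}
    (hψ : AEMeasurable ψ (volume.restrict (Ioi 0)))
    (h : ∀ s > 0, c ≤ (∫⁻ t in Ioc 0 s, ψ t) + f s) :
    c ≤ ∫⁻ t in Ioi 0, ENNReal.ofReal (exp (-t)) * (ψ t + f t) := by
  set E : ℝ → ℝ≥0∞ := fun t => ENNReal.ofReal (exp (-t))
  have hE : Measurable E := by fun_prop
  have hE_Ici : ∀ t, ∫⁻ s in Ici t, E s = E t := fun t => by
    rw [← setLIntegral_congr Ioi_ae_eq_Ici, lintegral_Ioi_ofReal_exp_neg]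
  have hΦ : Measurable fun s => ∫⁻ t in Ioc 0 s, ψ t :=
    Monotone.measurable fun s s' hss' => lintegral_mono_set (Ioc_subset_Ioc_right hss')
  calc c = ∫⁻ s in Ioi 0, E s * c := by
        rw [lintegral_mul_const _ hE, lintegral_Ioi_ofReal_exp_neg]
        simp
    _ ≤ ∫⁻ s in Ioi 0, (E s * ∫⁻ t in Ioc 0 s, ψ t) + E s * f s :=
        setLIntegral_mono' measurableSet_Ioi fun s hs => by
          rw [← mul_add]
          gcongr
          exact h s hs
    _ = ∫⁻ t in Ioi 0, E t * ψ t + E t * f t := by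
        rw [lintegral_add_left (f := fun s => E s * ∫⁻ t in Ioc 0 s, ψ t) (hE.mul hΦ),
          lintegral_add_left' (f := fun t => E t * ψ t) (hE.aemeasurable.mul hψ),
          lintegral_Ioi_mul_lintegral_Ioc hE hψ]
        simp_rw [hE_Ici]
    _ = ∫⁻ t in Ioi 0, E t * (ψ t + f t) := by simp_rw [mul_add]

theorem verification_inequality {X : Type*} [MetricSpace X] [MeasurableSpace X] [BorelSpace X]
    (v G : X → ℝ) (hGmeas : Measurable G)
    (hSUG : IsStrongUpperGradient G v)
    (B : ℝ) (hB : ∀ x : X, B ≤ v x)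
    (γ : ℝ → X) (hγcont : ContinuousOn γ (Set.Ici 0))
    (m : ℝ → ℝ)
    (hm : ∀ a b : ℝ, 0 ≤ a → a ≤ b → IsUpperSpeedOn γ m a b) :
    ENNReal.ofReal (v (γ 0) - B) ≤
      ∫⁻ t in Set.Ioi (0:ℝ),
        ENNReal.ofReal
          (Real.exp (-t) * ((1/2) * (m t) ^ 2 + (v (γ t) + (1/2) * (G (γ t)) ^ 2))
            - Real.exp (-t) * B) := by
  have hm_meas : AEMeasurable m (volume.restrict (Ioi 0)) :=
    aemeasurable_Ioi_of_forall_Ioc fun b hb => (hm 0 b le_rfl hb.le).2.1.1.aemeasurable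
  have hGγ_meas : AEMeasurable (fun t => G (γ t)) (volume.restrict (Ioi 0)) :=
    hGmeas.comp_aemeasurable ((hγcont.mono Ioi_subset_Ici_self).aemeasurable measurableSet_Ioi)
  refine (le_lintegral_exp_neg_mul_add
    (ψ := fun t => ENNReal.ofReal (1 / 2 * m t ^ 2 + 1 / 2 * G (γ t) ^ 2))
    (f := fun t => ENNReal.ofReal (v (γ t) - B)) ?_ fun s hs => ?_).trans_eq
    (setLIntegral_congr_fun measurableSet_Ioi fun t _ => ?_)
  · exact ENNReal.measurable_ofReal.comp_aemeasurable
      (((hm_meas.pow_const 2).const_mul _).add ((hGγ_meas.pow_const 2).const_mul _))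
  · calc ENNReal.ofReal (v (γ 0) - B)
        ≤ ENNReal.ofReal (v (γ 0) - v (γ s)) + ENNReal.ofReal (v (γ s) - B) := by
          rw [← sub_add_sub_cancel _ (v (γ s))]
          exact ENNReal.ofReal_add_le
      _ ≤ _ := by
          gcongr
          exact hSUG.ofReal_sub_le_lintegral hs.le (hγcont.mono Icc_subset_Ici_self)
            (hm 0 s le_rfl hs.le)
  · rw [← ENNReal.ofReal_add (by positivity) (sub_nonneg.2 (hB _)),
      ← ENNReal.ofReal_mul (exp_pos _).le]
    ring_nf
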